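/- arXiv:1306.4943 — 3 statements merged into one kernel-verified Lean document; each statement's English description precedes it below -/
import Mathlib

section
/- For every forecasting system F, the adversarial data sequence defined recursively by a_k = 1 if F(a_1,...,a_{k-1}) < 1/2 and a_k = 0 otherwise is a sequence for which F fails to be high-low calibrated; in fact, on this sequence every discrepancy satisfies |a_k − π_k| ≥ 1/2. -/
open Filter Topology

/-- The forecast probability on day `k` for data sequence `a`:
`F` applied to the first `k` bits of `a`. -/
noncomputable def fc (F : List Bool → ℝ) (a : ℕ → Bool) (k : ℕ) : ℝ :=
  F (List.ofFn (fun i : Fin k => a i))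

/-- The discrepancy on day `k`: `a_k - π_k`. -/
noncomputable def disc (F : List Bool → ℝ) (a : ℕ → Bool) (k : ℕ) : ℝ :=
  (if a k then 1 else 0) - fc F a k

open Classical in
/-- Mean discrepancy over the days `k < n` satisfying `P`. -/
noncomputable def avgDisc (F : List Bool → ℝ) (a : ℕ → Bool) (P : ℕ → Prop) (n : ℕ) : ℝ :=
  (∑ k ∈ (Finset.range n).filter P, disc F a k) /
    (((Finset.range n).filter P).card : ℝ)

/-- `F` is high-low calibrated for `a`: for each of the two groups of days
(forecast `≥ 1/2`, forecast `< 1/2`), either the group is finite or the mean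
discrepancy over that group among the first `n` days tends to `0`. -/
def HighLowCalibrated (F : List Bool → ℝ) (a : ℕ → Bool) : Prop :=
  ({k | 1/2 ≤ fc F a k}.Finite ∨
      Tendsto (avgDisc F a (fun k => 1/2 ≤ fc F a k)) atTop (𝓝 0)) ∧
  ({k | fc F a k < 1/2}.Finite ∨
      Tendsto (avgDisc F a (fun k => fc F a k < 1/2)) atTop (𝓝 0))

open Classical in
/-- The adversarial sequence against `F`: `a_k = 1` iff the forecast is `< 1/2`. -/
noncomputable def adv (F : List Bool → ℝ) : ℕ → Bool
  | k => if F (List.ofFn (fun i : Fin k => adv F i)) < 1/2 then true else false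

open Classical in
lemma adv_spec (F : List Bool → ℝ) (k : ℕ) :
    adv F k = if fc F (adv F) k < 1/2 then true else false := by
  rw [adv]; rfl

lemma disc_lo (F : List Bool → ℝ) (k : ℕ) (h : fc F (adv F) k < 1/2) :
    disc F (adv F) k = 1 - fc F (adv F) k := by
  unfold disc
  rw [adv_spec, if_pos h, if_pos rfl]

lemma disc_hi (F : List Bool → ℝ) (k : ℕ) (h : 1/2 ≤ fc F (adv F) k) :
    disc F (adv F) k = - fc F (adv F) k := by
  unfold disc
  rw [adv_spec, if_neg (not_lt.mpr h)]
  simp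

theorem adversarial_sequence_defeats_forecaster
    (F : List Bool → ℝ) (hF : ∀ w, F w ∈ Set.Icc (0 : ℝ) 1) :
    (∀ k, 1/2 ≤ |disc F (adv F) k|) ∧ ¬ HighLowCalibrated F (adv F) := by
  constructor
  · intro k
    by_cases h : fc F (adv F) k < 1/2
    · rw [disc_lo F k h, abs_of_nonneg (by linarith)]; linarith
    · push_neg at h
      rw [disc_hi F k h, abs_neg, abs_of_nonneg (by linarith)]; linarith
  · rintro ⟨h1, h2⟩
    classical
    by_cases hinf : {k | fc F (adv F) k < 1/2}.Infinite
    · -- low side: average discrepancy is ≥ 1/2 for all large n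
      rcases h2 with hfin | htend
      · exact hinf hfin
      · obtain ⟨m, hm⟩ := hinf.nonempty
        have key : ∀ n, m < n →
            1/2 ≤ avgDisc F (adv F) (fun k => fc F (adv F) k < 1/2) n := by
          intro n hn
          set s := (Finset.range n).filter (fun k => fc F (adv F) k < 1/2) with hs
          have hms : m ∈ s := by
            simp only [hs, Finset.mem_filter, Finset.mem_range]
            exact ⟨hn, hm⟩
          have hcard : (0 : ℝ) < s.card := by
            exact_mod_cast Finset.card_pos.mpr ⟨m, hms⟩
          have hsum : ∑ k ∈ s, (1/2 : ℝ) ≤ ∑ k ∈ s, disc F (adv F) k := by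
            refine Finset.sum_le_sum fun k hk => ?_
            have hk' : fc F (adv F) k < 1/2 := (Finset.mem_filter.mp hk).2
            rw [disc_lo F k hk']; linarith
          rw [Finset.sum_const, nsmul_eq_mul] at hsum
          unfold avgDisc
          rw [← hs, le_div_iff₀ hcard]
          linarith
        have hev := htend.eventually (gt_mem_nhds (by norm_num : (0:ℝ) < 1/2))
        rw [eventually_atTop] at hev
        obtain ⟨N, hN⟩ := hev
        have h1' := key (max N (m+1)) (lt_of_lt_of_le (Nat.lt_succ_self m) (le_max_right _ _))
        have h2' := hN (max N (m+1)) (le_max_left _ _)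
        linarith
    · -- high side is infinite
      rw [Set.not_infinite] at hinf
      have hinf' : {k | 1/2 ≤ fc F (adv F) k}.Infinite := by
        have : {k | 1/2 ≤ fc F (adv F) k} = {k | fc F (adv F) k < 1/2}ᶜ := by
          ext k; simp [not_lt]
        rw [this]
        exact hinf.infinite_compl
      rcases h1 with hfin | htend
      · exact hinf' hfin
      · obtain ⟨m, hm⟩ := hinf'.nonempty
        have key : ∀ n, m < n →
            avgDisc F (adv F) (fun k => 1/2 ≤ fc F (adv F) k) n ≤ -(1/2) := by
          intro n hn
          set s := (Finset.range n).filter (fun k => 1/2 ≤ fc F (adv F) k) with hs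
          have hms : m ∈ s := by
            simp only [hs, Finset.mem_filter, Finset.mem_range]
            exact ⟨hn, hm⟩
          have hcard : (0 : ℝ) < s.card := by
            exact_mod_cast Finset.card_pos.mpr ⟨m, hms⟩
          have hsum : ∑ k ∈ s, disc F (adv F) k ≤ ∑ k ∈ s, (-(1/2) : ℝ) := by
            refine Finset.sum_le_sum fun k hk => ?_
            have hk' : 1/2 ≤ fc F (adv F) k := (Finset.mem_filter.mp hk).2
            rw [disc_hi F k hk']; linarith
          rw [Finset.sum_const] at hsum
          unfold avgDisc
          rw [← hs, div_le_iff₀ hcard]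
          simp only [nsmul_eq_mul] at hsum
          linarith
        have hev := htend.eventually (lt_mem_nhds (by norm_num : (-(1/2):ℝ) < 0))
        rw [eventually_atTop] at hev
        obtain ⟨N, hN⟩ := hev
        have h1' := key (max N (m+1)) (lt_of_lt_of_le (Nat.lt_succ_self m) (le_max_right _ _))
        have h2' := hN (max N (m+1)) (le_max_left _ _)
        linarith
end

section
/- For any countable family (F_i)_{i ∈ ℕ} of forecasting systems, the set of infinite binary sequences a such that every F_i fails to be high-low calibrated for a is residual in Cantor space. In particular, for any countable family there exist uncountably many sequences for which every F_i fails high-low calibration. -/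
open Filter Topology

/-! Fix a forecaster `F` and `n`, and let `U_n` be the set of sequences for which, at some stage `m`,
one of the two forecast groups has at least `n` days among the first `m` and a mean discrepancy of
absolute value at least `1/4`. Being decided by a finite prefix, `U_n` is open. It is dense: after
any prefix, answering `1` exactly when the forecast is below `1/2` gives every later day a
discrepancy of size at least `1/2` whose sign depends only on the day's group, so once the tail
outweighs the prefix one of the groups is biased. A sequence in every `U_n` is not high-low
calibrated for `F`; hence the set of the theorem contains the countable intersection of the sets
`U_n` for all the `F_i`, and is residual. Cantor space is a Baire space without isolated points,
in which countable sets are meagre, so a residual set is uncountable. -/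

open Finset PiNat

section CantorSpace

variable {E : ℕ → Type*} [∀ n, TopologicalSpace (E n)] [∀ n, DiscreteTopology (E n)]

lemma isOpen_setOf_of_mem_cylinder {P : (∀ n, E n) → Prop} (m : ℕ)
    (h : ∀ x y, y ∈ cylinder x m → P x → P y) : IsOpen {x | P x} :=
  isOpen_iff_forall_mem_open.mpr fun x hx =>
    ⟨cylinder x m, fun y hy => h x y hy hx, isOpen_cylinder E x m, self_mem_cylinder x m⟩

lemma dense_of_inter_cylinder_nonempty {s : Set (∀ n, E n)}
    (h : ∀ x n, (cylinder x n ∩ s).Nonempty) : Dense s :=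
  (isTopologicalBasis_cylinders E).dense_iff.mpr fun _ ⟨x, n, hx⟩ _ => hx ▸ h x n

instance PiNat.nhdsNE_neBot [∀ n, Nontrivial (E n)] (x : ∀ n, E n) : NeBot (𝓝[≠] x) := by
  rw [← mem_closure_iff_nhdsWithin_neBot, (isTopologicalBasis_cylinders E).mem_closure_iff]
  rintro _ ⟨y, n, rfl⟩ hx
  obtain ⟨e, he⟩ := exists_ne (x n)
  refine ⟨Function.update x n e, ?_, fun h => he ?_⟩
  · rw [← mem_cylinder_iff_eq.mp hx]
    exact update_mem_cylinder x n e
  · simpa using congrFun h n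

end CantorSpace

section Baire

variable {X : Type*} [TopologicalSpace X] [T1Space X] [∀ x : X, NeBot (𝓝[≠] x)]

lemma Set.Countable.isMeagre {s : Set X} (hs : s.Countable) : IsMeagre s := by
  have hpoint (x : X) : IsMeagre {x} :=
    residual_of_dense_open isOpen_compl_singleton (dense_compl_singleton x)
  simpa using isMeagre_biUnion hs fun x _ => hpoint x

lemma not_countable_of_mem_residual [BaireSpace X] [Nonempty X] {s : Set X}
    (hs : s ∈ residual X) : ¬ s.Countable := fun hc => by
  have hempty : (∅ : Set X) ∈ residual X := by
    simpa using inter_mem hs hc.isMeagre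
  simpa using (dense_of_mem_residual hempty).nonempty

end Baire

section Averages

lemma quarter_le_sum_div_card {g : ℕ → ℝ} {s t : Finset ℕ} (hst : Disjoint s t)
    (ht : ∀ k ∈ t, 1 / 2 ≤ g k) (hlarge : 4 * |∑ k ∈ s, g k| + #s < #t) :
    1 / 4 ≤ (∑ k ∈ s ∪ t, g k) / #(s ∪ t) := by
  have hsum_t : (#t : ℝ) * (1 / 2) ≤ ∑ k ∈ t, g k := by
    simpa using card_nsmul_le_sum t g _ ht
  have hcard_pos : (0 : ℝ) < #s + #t := by linarith [abs_nonneg (∑ k ∈ s, g k)]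
  rw [sum_union hst, card_union_of_disjoint hst, Nat.cast_add, le_div_iff₀ hcard_pos]
  linarith [neg_abs_le (∑ k ∈ s, g k)]

lemma quarter_le_abs_sum_div_card {g : ℕ → ℝ} {s t : Finset ℕ} (hst : Disjoint s t)
    (ht : (∀ k ∈ t, 1 / 2 ≤ g k) ∨ ∀ k ∈ t, g k ≤ -(1 / 2))
    (hlarge : 4 * |∑ k ∈ s, g k| + #s < #t) :
    1 / 4 ≤ |(∑ k ∈ s ∪ t, g k) / #(s ∪ t)| := by
  rcases ht with hpos | hneg
  · exact (quarter_le_sum_div_card hst hpos hlarge).trans (le_abs_self _)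
  · have := quarter_le_sum_div_card (g := fun k => -g k) hst (fun k hk => by linarith [hneg k hk])
      (by simpa [sum_neg_distrib] using hlarge)
    rw [← abs_neg, ← neg_div, ← sum_neg_distrib]
    exact this.trans (le_abs_self _)

end Averages

section Forecasts

open Classical

variable {F : List Bool → ℝ} {G : Set ℝ} {a b : ℕ → Bool} {n p m k : ℕ}

noncomputable def groupDays (F : List Bool → ℝ) (G : Set ℝ) (a : ℕ → Bool) (s : Finset ℕ) :
    Finset ℕ :=
  {k ∈ s | fc F a k ∈ G}

lemma mem_groupDays {s : Finset ℕ} : k ∈ groupDays F G a s ↔ k ∈ s ∧ fc F a k ∈ G :=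
  mem_filter

lemma card_groupDays_le (s : Finset ℕ) : #(groupDays F G a s) ≤ #s :=
  card_filter_le _ _

lemma avgDisc_eq_sum_groupDays :
    avgDisc F a (fun k => fc F a k ∈ G) m =
      (∑ k ∈ groupDays F G a (range m), disc F a k) / #(groupDays F G a (range m)) :=
  rfl

lemma card_groupDays_add_card_groupDays_compl (s : Finset ℕ) :
    #(groupDays F G a s) + #(groupDays F Gᶜ a s) = #s := by
  convert card_filter_add_card_filter_not (s := s) (fun k => fc F a k ∈ G) using 3 <;>
    ext <;> simp [groupDays]

lemma groupDays_range_eq_union (hpm : p ≤ m) :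
    groupDays F G a (range m) = groupDays F G a (range p) ∪ groupDays F G a (Ico p m) := by
  rw [groupDays, groupDays, groupDays, ← filter_union, range_eq_Ico, range_eq_Ico,
    Ico_union_Ico_eq_Ico (Nat.zero_le p) hpm]

lemma disjoint_groupDays_range_Ico :
    Disjoint (groupDays F G a (range p)) (groupDays F G a (Ico p m)) := by
  refine disjoint_filter_filter ?_
  rw [range_eq_Ico]
  exact Ico_disjoint_Ico_consecutive 0 p m

lemma fc_eq_of_mem_cylinder (h : b ∈ cylinder a k) : fc F b k = fc F a k := by
  simp only [fc]
  congr 2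
  funext i
  exact mem_cylinder_iff.mp h i i.isLt

lemma disc_eq_of_mem_cylinder (h : b ∈ cylinder a (k + 1)) : disc F b k = disc F a k := by
  rw [disc, disc, fc_eq_of_mem_cylinder (cylinder_anti a k.le_succ h),
    mem_cylinder_iff.mp h k k.lt_succ_self]

lemma groupDays_eq_of_mem_cylinder (h : b ∈ cylinder a m) :
    groupDays F G b (range m) = groupDays F G a (range m) :=
  filter_congr fun k hk => by
    rw [fc_eq_of_mem_cylinder (cylinder_anti a (mem_range.mp hk).le h)]

def IsBiasedAt (F : List Bool → ℝ) (G : Set ℝ) (a : ℕ → Bool) (n m : ℕ) : Prop :=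
  n ≤ #(groupDays F G a (range m)) ∧ 1 / 4 ≤ |avgDisc F a (fun k => fc F a k ∈ G) m|

lemma IsBiasedAt.of_mem_cylinder (hb : b ∈ cylinder a m) (h : IsBiasedAt F G a n m) :
    IsBiasedAt F G b n m := by
  have hdisc : ∀ k ∈ groupDays F G a (range m), disc F b k = disc F a k := fun k hk =>
    disc_eq_of_mem_cylinder (cylinder_anti a (mem_range.mp (mem_groupDays.mp hk).1) hb)
  rw [IsBiasedAt, avgDisc_eq_sum_groupDays, groupDays_eq_of_mem_cylinder hb, sum_congr rfl hdisc]
  exact h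

lemma isBiasedAt_of_tail (hpm : p ≤ m)
    (hsign : (∀ k ∈ groupDays F G a (Ico p m), 1 / 2 ≤ disc F a k) ∨
      ∀ k ∈ groupDays F G a (Ico p m), disc F a k ≤ -(1 / 2))
    (hlarge : n + 4 * |∑ k ∈ groupDays F G a (range p), disc F a k| + p <
      #(groupDays F G a (Ico p m))) :
    IsBiasedAt F G a n m := by
  have hhead : (#(groupDays F G a (range p)) : ℝ) ≤ p := by
    exact_mod_cast (card_groupDays_le _).trans (card_range p).le
  have htail : n < #(groupDays F G a (Ico p m)) := by
    have : (n : ℝ) < #(groupDays F G a (Ico p m)) := by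
      linarith [abs_nonneg (∑ k ∈ groupDays F G a (range p), disc F a k)]
    exact_mod_cast this
  rw [IsBiasedAt, avgDisc_eq_sum_groupDays, groupDays_range_eq_union hpm]
  refine ⟨htail.le.trans (card_le_card subset_union_right), ?_⟩
  exact quarter_le_abs_sum_div_card disjoint_groupDays_range_Ico hsign (by linarith)

end Forecasts

section Adversary

variable {F : List Bool → ℝ} {a : ℕ → Bool} {p k : ℕ}

noncomputable def advFrom (F : List Bool → ℝ) (a : ℕ → Bool) (p : ℕ) : ℕ → Bool
  | k => if k < p then a k else decide (F (List.ofFn fun i : Fin k => advFrom F a p i) < 1 / 2)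

lemma advFrom_mem_cylinder : advFrom F a p ∈ cylinder a p :=
  mem_cylinder_iff.mpr fun i hi => by rw [advFrom, if_pos hi]

lemma advFrom_of_le (hk : p ≤ k) :
    advFrom F a p k = decide (fc F (advFrom F a p) k < 1 / 2) := by
  rw [advFrom, if_neg (not_lt.mpr hk), fc]

lemma half_le_disc_advFrom (hk : p ≤ k) (hlo : fc F (advFrom F a p) k ∈ Set.Iio (1 / 2)) :
    1 / 2 ≤ disc F (advFrom F a p) k := by
  have hlo : fc F (advFrom F a p) k < 1 / 2 := hlo
  rw [disc, advFrom_of_le hk, decide_eq_true hlo, if_pos rfl]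
  linarith

lemma disc_advFrom_le (hk : p ≤ k) (hhi : fc F (advFrom F a p) k ∈ Set.Ici (1 / 2)) :
    disc F (advFrom F a p) k ≤ -(1 / 2) := by
  have hhi : 1 / 2 ≤ fc F (advFrom F a p) k := hhi
  rw [disc, advFrom_of_le hk, decide_eq_false (not_lt.mpr hhi)]
  simp only [Bool.false_eq_true, if_false]
  linarith

/-- Over the `2N` adversarial days `p ≤ k < p + 2N` one of the two groups receives at least `N`
days, each with discrepancy of the same sign and size at least `1/2`. -/
lemma exists_isBiasedAt_advFrom (F : List Bool → ℝ) (a : ℕ → Bool) (p n : ℕ) :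
    ∃ m, IsBiasedAt F (Set.Ici (1 / 2)) (advFrom F a p) n m ∨
      IsBiasedAt F (Set.Iio (1 / 2)) (advFrom F a p) n m := by
  set b := advFrom F a p
  obtain ⟨N, hN⟩ := exists_nat_gt (n + 4 * (|∑ k ∈ groupDays F (Set.Ici (1 / 2)) b (range p),
    disc F b k| + |∑ k ∈ groupDays F (Set.Iio (1 / 2)) b (range p), disc F b k|) + p)
  have hsplit := card_groupDays_add_card_groupDays_compl (F := F) (G := Set.Ici (1 / 2)) (a := b)
    (Ico p (p + 2 * N))
  rw [Set.compl_Ici, Nat.card_Ico] at hsplit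
  have hp : p ≤ p + 2 * N := by omega
  have habs_hi := abs_nonneg (∑ k ∈ groupDays F (Set.Ici (1 / 2)) b (range p), disc F b k)
  have habs_lo := abs_nonneg (∑ k ∈ groupDays F (Set.Iio (1 / 2)) b (range p), disc F b k)
  refine ⟨p + 2 * N, ?_⟩
  rcases le_or_gt N #(groupDays F (Set.Ici (1 / 2)) b (Ico p (p + 2 * N))) with hhi | hlo
  · have hhi : (N : ℝ) ≤ #(groupDays F (Set.Ici (1 / 2)) b (Ico p (p + 2 * N))) := by
      exact_mod_cast hhi
    refine .inl (isBiasedAt_of_tail hp (.inr fun k hk => ?_) (by linarith))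
    exact disc_advFrom_le (mem_Ico.mp (mem_groupDays.mp hk).1).1 (mem_groupDays.mp hk).2
  · have hlo : (N : ℝ) ≤ #(groupDays F (Set.Iio (1 / 2)) b (Ico p (p + 2 * N))) := by
      exact_mod_cast (by omega : N ≤ _)
    refine .inr (isBiasedAt_of_tail hp (.inl fun k hk => ?_) (by linarith))
    exact half_le_disc_advFrom (mem_Ico.mp (mem_groupDays.mp hk).1).1 (mem_groupDays.mp hk).2

end Adversary

section Calibration

variable {F : List Bool → ℝ} {G : Set ℝ} {a : ℕ → Bool} {n : ℕ}

def IsCalibratedOn (F : List Bool → ℝ) (G : Set ℝ) (a : ℕ → Bool) : Prop :=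
  {k | fc F a k ∈ G}.Finite ∨ Tendsto (avgDisc F a fun k => fc F a k ∈ G) atTop (𝓝 0)

lemma highLowCalibrated_iff :
    HighLowCalibrated F a ↔
      IsCalibratedOn F (Set.Ici (1 / 2)) a ∧ IsCalibratedOn F (Set.Iio (1 / 2)) a :=
  Iff.rfl

lemma not_isCalibratedOn_of_frequently_isBiasedAt
    (h : ∃ᶠ n in atTop, ∃ m, IsBiasedAt F G a n m) : ¬ IsCalibratedOn F G a := by
  rintro (hfin | htend)
  · obtain ⟨n, ⟨m, hcount, -⟩, hn⟩ :=
      (h.and_eventually (eventually_gt_atTop #hfin.toFinset)).exists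
    have hsub : groupDays F G a (range m) ⊆ hfin.toFinset := fun k hk =>
      hfin.mem_toFinset.mpr (mem_groupDays.mp hk).2
    have := card_le_card hsub
    omega
  · have hfreq : ∃ᶠ m in atTop, 1 / 4 ≤ |avgDisc F a (fun k => fc F a k ∈ G) m| :=
      frequently_atTop.mpr fun M => by
        obtain ⟨n, hn, m, hcount, hbias⟩ := frequently_atTop.mp h M
        exact ⟨m, hn.trans (hcount.trans ((card_groupDays_le _).trans (card_range m).le)), hbias⟩
    have hsmall : ∀ᶠ m in atTop, |avgDisc F a (fun k => fc F a k ∈ G) m| < 1 / 4 := by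
      simpa using htend.abs.eventually (gt_mem_nhds (by norm_num : |(0 : ℝ)| < 1 / 4))
    obtain ⟨m, hbig, hlt⟩ := (hfreq.and_eventually hsmall).exists
    linarith

def biasedSet (F : List Bool → ℝ) (n : ℕ) : Set (ℕ → Bool) :=
  {a | ∃ m, IsBiasedAt F (Set.Ici (1 / 2)) a n m ∨ IsBiasedAt F (Set.Iio (1 / 2)) a n m}

lemma not_highLowCalibrated_of_forall_mem_biasedSet (h : ∀ n, a ∈ biasedSet F n) :
    ¬ HighLowCalibrated F a := by
  have hfreq : (∃ᶠ n in atTop, ∃ m, IsBiasedAt F (Set.Ici (1 / 2)) a n m) ∨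
      ∃ᶠ n in atTop, ∃ m, IsBiasedAt F (Set.Iio (1 / 2)) a n m :=
    frequently_or_distrib.mp (Frequently.of_forall fun n => exists_or.mp (h n))
  rw [highLowCalibrated_iff, not_and_or]
  exact hfreq.imp not_isCalibratedOn_of_frequently_isBiasedAt
    not_isCalibratedOn_of_frequently_isBiasedAt

lemma biasedSet_mem_residual (F : List Bool → ℝ) (n : ℕ) :
    biasedSet F n ∈ residual (ℕ → Bool) := by
  refine residual_of_dense_open ?_ ?_
  · rw [biasedSet, Set.ofPred_exists]
    exact isOpen_iUnion fun m => isOpen_setOf_of_mem_cylinder m fun a b hb h =>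
      h.imp (·.of_mem_cylinder hb) (·.of_mem_cylinder hb)
  · exact dense_of_inter_cylinder_nonempty fun a p =>
      ⟨advFrom F a p, advFrom_mem_cylinder, exists_isBiasedAt_advFrom F a p n⟩

end Calibration

theorem countable_family_noncalibration_residual_and_uncountable_general
    (F : ℕ → List Bool → ℝ) :
    {a : ℕ → Bool | ∀ i, ¬ HighLowCalibrated (F i) a} ∈ residual (ℕ → Bool) ∧
    ¬ {a : ℕ → Bool | ∀ i, ¬ HighLowCalibrated (F i) a}.Countable := by
  have hres : {a : ℕ → Bool | ∀ i, ¬ HighLowCalibrated (F i) a} ∈ residual (ℕ → Bool) := by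
    refine mem_of_superset (countable_iInter_mem.mpr fun i =>
      countable_iInter_mem.mpr fun n => biasedSet_mem_residual (F i) n) fun a ha i => ?_
    exact not_highLowCalibrated_of_forall_mem_biasedSet (Set.mem_iInter₂.mp ha i)
  exact ⟨hres, not_countable_of_mem_residual hres⟩

theorem countable_family_noncalibration_residual_and_uncountable
    (F : ℕ → List Bool → ℝ) (hF : ∀ i w, F i w ∈ Set.Icc (0 : ℝ) 1) :
    {a : ℕ → Bool | ∀ i, ¬ HighLowCalibrated (F i) a} ∈ residual (ℕ → Bool) ∧
    ¬ {a : ℕ → Bool | ∀ i, ¬ HighLowCalibrated (F i) a}.Countable :=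
  countable_family_noncalibration_residual_and_uncountable_general F
end

section
/- Given any forecasting system F and any finite binary string w, there exists a finite binary extension v of w such that, along v, either the mean discrepancy over the days (among |v| days) with forecast π_k < 1/2 is at least 1/4, or the mean discrepancy over the days with forecast π_k ≥ 1/2 is at most −1/4. -/
open Filter Topology

/-- Forecast along a finite string `v` on day `k`: `F` applied to the first `k` bits. -/
noncomputable def fcStr (F : List Bool → ℝ) (v : List Bool) (k : ℕ) : ℝ :=
  F (v.take k)

/-- Discrepancy along a finite string `v` on day `k`. -/
noncomputable def discStr (F : List Bool → ℝ) (v : List Bool) (k : ℕ) : ℝ :=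
  (if v.getD k false then 1 else 0) - fcStr F v k

open Classical in
/-- Mean discrepancy along a finite string `v` over the days `k < |v|` satisfying `P`. -/
noncomputable def meanDiscStr (F : List Bool → ℝ) (v : List Bool) (P : ℕ → Prop) : ℝ :=
  (∑ k ∈ (Finset.range v.length).filter P, discStr F v k) /
    (((Finset.range v.length).filter P).card : ℝ)

/-- The position after round `n` of the Banach–Mazur game on Cantor space in which
Player 2 uses strategy `σ` (responding to the current finite string by appending
`σ` of it) and Player 1's successive moves are the appended strings `f 0, f 1, …`
(Player 1 moves first). -/
def posSeq (σ : List Bool → List Bool) (f : ℕ → List Bool) : ℕ → List Bool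
  | 0 => f 0
  | n + 1 => (posSeq σ f n ++ σ (posSeq σ f n)) ++ f (n + 1)

/-- `a` is an infinite binary sequence compatible with every position of the play,
i.e. `a` lies in the intersection of the chosen cylinder sets. -/
def IsLimit (σ : List Bool → List Bool) (f : ℕ → List Bool) (a : ℕ → Bool) : Prop :=
  ∀ n k, k < (posSeq σ f n).length → (posSeq σ f n).getD k false = a k

/-!
Extend `w` adversarially: on each new day the outcome is `1` exactly when the forecast is
below `1/2`. Every new low-forecast day then has discrepancy at least `1/2` and every new
high-forecast day discrepancy at most `-1/2`, while the `|w|` old days have discrepancy in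
`[-1, 1]`. After `10 |w| + 1` new days one of the two groups has more than `5 |w|` new days,
which outweighs the old ones enough to push its mean discrepancy beyond `±1/4`.
-/

open Finset

lemma quarter_le_mean_of_split {ι : Type*} [DecidableEq ι] {s t : Finset ι} {f : ι → ℝ}
    (hst : Disjoint s t) (hs : ∀ i ∈ s, -1 ≤ f i) (ht : ∀ i ∈ t, 1/2 ≤ f i)
    (hcard : 5 * #s < #t) :
    (s ∪ t).Nonempty ∧ 1/4 ≤ (∑ i ∈ s ∪ t, f i) / #(s ∪ t) := by
  have hpos : 0 < #(s ∪ t) := by rw [card_union_of_disjoint hst]; omega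
  refine ⟨card_pos.mp hpos, ?_⟩
  have hsum_s : -(#s : ℝ) ≤ ∑ i ∈ s, f i := by
    simpa using card_nsmul_le_sum s f (-1) hs
  have hsum_t : (#t : ℝ) / 2 ≤ ∑ i ∈ t, f i := by
    simpa [div_eq_mul_inv, mul_comm] using card_nsmul_le_sum t f (1/2) ht
  have hcardR : 5 * (#s : ℝ) < #t := by exact_mod_cast hcard
  rw [le_div_iff₀ (by exact_mod_cast hpos), sum_union hst, card_union_of_disjoint hst]
  push_cast
  linarith

lemma filter_range_eq_union_filter_Ico (P : ℕ → Prop) [DecidablePred P] {n m : ℕ} (h : n ≤ m) :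
    (range m).filter P = (range n).filter P ∪ (Ico n m).filter P := by
  rw [← filter_union, range_eq_Ico, range_eq_Ico, Ico_union_Ico_eq_Ico (Nat.zero_le n) h]

lemma quarter_le_mean_of_many_late (P : ℕ → Prop) [DecidablePred P] {f : ℕ → ℝ} {n m : ℕ}
    (hnm : n ≤ m) (hearly : ∀ k < n, -1 ≤ f k) (hlate : ∀ k ∈ (Ico n m).filter P, 1/2 ≤ f k)
    (hmany : 5 * n < #((Ico n m).filter P)) :
    ((range m).filter P).Nonempty ∧
      1/4 ≤ (∑ k ∈ (range m).filter P, f k) / #((range m).filter P) := by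
  rw [filter_range_eq_union_filter_Ico P hnm]
  refine quarter_le_mean_of_split ?_ (fun k hk => hearly k ?_) hlate ?_
  · refine disjoint_left.2 fun k hk hk' => ?_
    simp only [mem_filter, mem_range, mem_Ico] at hk hk'
    omega
  · exact mem_range.1 (mem_filter.1 hk).1
  · have := card_filter_le (range n) P
    rw [card_range] at this
    omega

section Forecast

variable {F : List Bool → ℝ} {v : List Bool} {k n : ℕ}

lemma neg_one_le_discStr (h : fcStr F v k ≤ 1) : -1 ≤ discStr F v k := by
  unfold discStr
  split_ifs <;> linarith

lemma discStr_le_one (h : 0 ≤ fcStr F v k) : discStr F v k ≤ 1 := by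
  unfold discStr
  split_ifs <;> linarith

lemma half_le_discStr_of_getD_eq (h : v.getD k false = decide (fcStr F v k < 1/2))
    (hk : fcStr F v k < 1/2) : 1/2 ≤ discStr F v k := by
  rw [discStr, h, decide_eq_true hk]
  norm_num
  linarith

lemma discStr_le_neg_half_of_getD_eq (h : v.getD k false = decide (fcStr F v k < 1/2))
    (hk : 1/2 ≤ fcStr F v k) : discStr F v k ≤ -(1/2) := by
  rw [discStr, h, decide_eq_false (not_lt.mpr hk)]
  norm_num
  linarith

lemma fcStr_append_of_le_length (l : List Bool) (hk : k ≤ v.length) :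
    fcStr F (v ++ l) k = fcStr F v k := by
  rw [fcStr, fcStr, List.take_append_of_le_length hk]

lemma card_filter_low_add_card_filter_high (s : Finset ℕ) :
    #(s.filter (fun k => fcStr F v k < 1/2)) + #(s.filter (fun k => 1/2 ≤ fcStr F v k)) = #s := by
  simpa only [not_lt] using card_filter_add_card_filter_not (fun k => fcStr F v k < 1/2) (s := s)

def AdversarialFrom (F : List Bool → ℝ) (n : ℕ) (v : List Bool) : Prop :=
  ∀ k, n ≤ k → k < v.length → v.getD k false = decide (fcStr F v k < 1/2)

lemma AdversarialFrom.append_decide (h : AdversarialFrom F n v) :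
    AdversarialFrom F n (v ++ [decide (F v < 1/2)]) := by
  intro k hk hlt
  have hle : k ≤ v.length := by simpa [Nat.lt_succ_iff] using hlt
  rw [fcStr_append_of_le_length _ hle]
  rcases hle.lt_or_eq with hlt' | rfl
  · rw [List.getD_append _ _ _ _ hlt']
    exact h k hk hlt'
  · simp [fcStr]

open Classical in
lemma AdversarialFrom.quarter_le_meanDiscStr_low (hF : ∀ w, F w ∈ Set.Icc (0 : ℝ) 1)
    (hv : AdversarialFrom F n v) (hn : n ≤ v.length)
    (hmany : 5 * n < #((Ico n v.length).filter (fun k => fcStr F v k < 1/2))) :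
    ((range v.length).filter (fun k => fcStr F v k < 1/2)).Nonempty ∧
      1/4 ≤ meanDiscStr F v (fun k => fcStr F v k < 1/2) := by
  refine quarter_le_mean_of_many_late _ hn (fun k _ => neg_one_le_discStr (hF _).2)
    (fun k hk => ?_) hmany
  obtain ⟨hk, hlow⟩ := mem_filter.1 hk
  obtain ⟨hnk, hkv⟩ := mem_Ico.1 hk
  exact half_le_discStr_of_getD_eq (hv k hnk hkv) hlow

open Classical in
lemma AdversarialFrom.meanDiscStr_high_le_neg_quarter (hF : ∀ w, F w ∈ Set.Icc (0 : ℝ) 1)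
    (hv : AdversarialFrom F n v) (hn : n ≤ v.length)
    (hmany : 5 * n < #((Ico n v.length).filter (fun k => 1/2 ≤ fcStr F v k))) :
    ((range v.length).filter (fun k => 1/2 ≤ fcStr F v k)).Nonempty ∧
      meanDiscStr F v (fun k => 1/2 ≤ fcStr F v k) ≤ -(1/4) := by
  have hlate : ∀ k ∈ (Ico n v.length).filter (fun k => 1/2 ≤ fcStr F v k),
      1/2 ≤ -discStr F v k := fun k hk => by
    obtain ⟨hk, hhigh⟩ := mem_filter.1 hk
    obtain ⟨hnk, hkv⟩ := mem_Ico.1 hk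
    exact le_neg_of_le_neg (discStr_le_neg_half_of_getD_eq (hv k hnk hkv) hhigh)
  obtain ⟨hne, hmean⟩ := quarter_le_mean_of_many_late _ hn
    (fun k _ => neg_le_neg (discStr_le_one (hF _).1)) hlate hmany
  rw [sum_neg_distrib, neg_div] at hmean
  exact ⟨hne, by rw [meanDiscStr]; linarith⟩

end Forecast

noncomputable def advExt (F : List Bool → ℝ) (w : List Bool) : ℕ → List Bool
  | 0 => w
  | j + 1 => advExt F w j ++ [decide (F (advExt F w j) < 1/2)]

lemma advExt_length (F : List Bool → ℝ) (w : List Bool) (j : ℕ) :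
    (advExt F w j).length = w.length + j := by
  induction j with
  | zero => rfl
  | succ j ih => simp [advExt, ih, Nat.add_assoc]

lemma prefix_advExt (F : List Bool → ℝ) (w : List Bool) (j : ℕ) : w <+: advExt F w j := by
  induction j with
  | zero => exact List.prefix_rfl
  | succ j ih => exact ih.trans (List.prefix_append _ _)

lemma adversarialFrom_advExt (F : List Bool → ℝ) (w : List Bool) (j : ℕ) :
    AdversarialFrom F w.length (advExt F w j) := by
  induction j with
  | zero => intro k hk hlt; exact absurd hlt (not_lt.mpr hk)
  | succ j ih => exact ih.append_decide

open Classical in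
theorem extension_lemma
    (F : List Bool → ℝ) (hF : ∀ w, F w ∈ Set.Icc (0 : ℝ) 1) (w : List Bool) :
    ∃ v : List Bool, w <+: v ∧
      ((((Finset.range v.length).filter (fun k => fcStr F v k < 1/2)).Nonempty ∧
          1/4 ≤ meanDiscStr F v (fun k => fcStr F v k < 1/2)) ∨
        (((Finset.range v.length).filter (fun k => 1/2 ≤ fcStr F v k)).Nonempty ∧
          meanDiscStr F v (fun k => 1/2 ≤ fcStr F v k) ≤ -(1/4))) := by
  set n := w.length
  set v := advExt F w (10 * n + 1)
  have hlen : v.length = n + (10 * n + 1) := advExt_length F w _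
  have hv : AdversarialFrom F n v := adversarialFrom_advExt F w _
  have hcount := card_filter_low_add_card_filter_high (F := F) (v := v) (Ico n v.length)
  rw [Nat.card_Ico] at hcount
  refine ⟨v, prefix_advExt F w _, ?_⟩
  rcases (by omega : 5 * n < #((Ico n v.length).filter (fun k => fcStr F v k < 1/2)) ∨
      5 * n < #((Ico n v.length).filter (fun k => 1/2 ≤ fcStr F v k))) with hlow | hhigh
  · exact Or.inl (hv.quarter_le_meanDiscStr_low hF (by omega) hlow)
  · exact Or.inr (hv.meanDiscStr_high_le_neg_quarter hF (by omega) hhigh)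
end
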